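/- Elegant Bell SOS decomposition: let A_0, A_1, A_2, A_3 and B_0, B_1, B_2 be Hermitian operators squaring to the identity on a finite-dimensional Hilbert space, with each A_x commuting with each B_y. Define B^{el} = (A_0+A_1−A_2−A_3)B_0 + (A_0−A_1+A_2−A_3)B_1 + (A_0−A_1−A_2+A_3)B_2 and P_0 = A_0 − (B_0+B_1+B_2)/√3, P_1 = A_1 − (B_0−B_1−B_2)/√3, P_2 = A_2 − (−B_0+B_1−B_2)/√3, P_3 = A_3 − (−B_0−B_1+B_2)/√3. Then 4√3·1 − B^{el} = (√3/2) Σ_{i=0}^{3} P_i². In particular ⟨ψ, B^{el} ψ⟩ ≤ 4√3 for every unit vector ψ. -/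

import Mathlib

/-!
Write `S_i` for the combination of the `B_y` inside `P_i`. Since `A_i` commutes with `S_i` and
`A_i² = 1`, `P_i² = 1 - (2/√3) A_i S_i + S_i²/3`. The sign vectors of the `S_i` are the vertices of
a regular tetrahedron, so the cross terms `B_j B_k` cancel in `Σ S_i²`, which is `4 Σ B_j² = 12`,
while `Σ A_i S_i` is `B^el`; hence `Σ P_i² = 8 - (2/√3) B^el`. As the `P_i` are Hermitian, the
identity exhibits `4√3 - B^el` as positive semidefinite.
-/

open Matrix
open scoped ComplexOrder

section ElegantBell

variable {R : Type*} [Ring R]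

def elegantBell (A0 A1 A2 A3 B0 B1 B2 : R) : R :=
  (A0 + A1 - A2 - A3) * B0 + (A0 - A1 + A2 - A3) * B1 + (A0 - A1 - A2 + A3) * B2

theorem mul_self_sub_smul_of_commute {K : Type*} [CommRing K] [Algebra K R] {A S : R}
    (hAS : Commute A S) (hA : A * A = 1) (c : K) :
    (A - c • S) * (A - c • S) = 1 - (2 * c) • (A * S) + (c * c) • (S * S) := by
  simp only [mul_sub, sub_mul, smul_mul_assoc, mul_smul_comm, hA, ← hAS.eq]
  module

theorem tetrahedral_sum_mul_self (B0 B1 B2 : R) :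
    (B0 + B1 + B2) * (B0 + B1 + B2) + (B0 - B1 - B2) * (B0 - B1 - B2)
      + (-B0 + B1 - B2) * (-B0 + B1 - B2) + (-B0 - B1 + B2) * (-B0 - B1 + B2)
      = 4 * (B0 * B0 + B1 * B1 + B2 * B2) := by
  noncomm_ring

theorem elegantBell_eq_sum_mul (A0 A1 A2 A3 B0 B1 B2 : R) :
    elegantBell A0 A1 A2 A3 B0 B1 B2 = A0 * (B0 + B1 + B2) + A1 * (B0 - B1 - B2)
      + A2 * (-B0 + B1 - B2) + A3 * (-B0 - B1 + B2) := by
  unfold elegantBell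
  noncomm_ring

theorem smul_one_sub_elegantBell_eq_smul_sum_mul_self {K : Type*} [Field K] [CharZero K]
    [Algebra K R] {t : K} (ht : t * t = 3)
    {A0 A1 A2 A3 B0 B1 B2 : R}
    (hA : ∀ X ∈ [A0, A1, A2, A3], X * X = 1) (hB : ∀ Y ∈ [B0, B1, B2], Y * Y = 1)
    (hcomm : ∀ X ∈ [A0, A1, A2, A3], ∀ Y ∈ [B0, B1, B2], Commute X Y) :
    (4 * t) • (1 : R) - elegantBell A0 A1 A2 A3 B0 B1 B2 =
      (t / 2) • ((A0 - t⁻¹ • (B0 + B1 + B2)) * (A0 - t⁻¹ • (B0 + B1 + B2))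
        + (A1 - t⁻¹ • (B0 - B1 - B2)) * (A1 - t⁻¹ • (B0 - B1 - B2))
        + (A2 - t⁻¹ • (-B0 + B1 - B2)) * (A2 - t⁻¹ • (-B0 + B1 - B2))
        + (A3 - t⁻¹ • (-B0 - B1 + B2)) * (A3 - t⁻¹ • (-B0 - B1 + B2))) := by
  have hAS : ∀ X ∈ [A0, A1, A2, A3], Commute X (B0 + B1 + B2) ∧ Commute X (B0 - B1 - B2)
      ∧ Commute X (-B0 + B1 - B2) ∧ Commute X (-B0 - B1 + B2) := fun X hX => by
    have h0 := hcomm X hX B0 (by simp)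
    have h1 := hcomm X hX B1 (by simp)
    have h2 := hcomm X hX B2 (by simp)
    exact ⟨(h0.add_right h1).add_right h2, (h0.sub_right h1).sub_right h2,
      (h0.neg_right.add_right h1).sub_right h2, (h0.neg_right.sub_right h1).add_right h2⟩
  have hS : (B0 + B1 + B2) * (B0 + B1 + B2) + (B0 - B1 - B2) * (B0 - B1 - B2)
      + (-B0 + B1 - B2) * (-B0 + B1 - B2) + (-B0 - B1 + B2) * (-B0 - B1 + B2)
      = (12 : K) • (1 : R) := by
    rw [tetrahedral_sum_mul_self, hB B0 (by simp), hB B1 (by simp), hB B2 (by simp)]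
    norm_num [ofNat_smul_eq_nsmul]
  have ht0 : t ≠ 0 := by rintro rfl; norm_num at ht
  rw [mul_self_sub_smul_of_commute (hAS A0 (by simp)).1 (hA A0 (by simp)),
    mul_self_sub_smul_of_commute (hAS A1 (by simp)).2.1 (hA A1 (by simp)),
    mul_self_sub_smul_of_commute (hAS A2 (by simp)).2.2.1 (hA A2 (by simp)),
    mul_self_sub_smul_of_commute (hAS A3 (by simp)).2.2.2 (hA A3 (by simp))]
  calc (4 * t) • (1 : R) - elegantBell A0 A1 A2 A3 B0 B1 B2
      = (t / 2) • ((4 : K) • 1 - (2 * t⁻¹) • elegantBell A0 A1 A2 A3 B0 B1 B2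
          + (t⁻¹ * t⁻¹) • (12 : K) • (1 : R)) := by
        match_scalars <;> field_simp; linear_combination (4 : K) * ht
    _ = _ := by
        rw [← hS, elegantBell_eq_sum_mul]
        module

end ElegantBell

section QuadraticForm

variable {n : Type*} [Fintype n]

theorem Matrix.IsHermitian.posSemidef_mul_self {R : Type*} [Ring R] [PartialOrder R] [StarRing R]
    [StarOrderedRing R] {P : Matrix n n R} (hP : P.IsHermitian) :
    (P * P).PosSemidef := by
  simpa only [hP.eq] using posSemidef_conjTranspose_mul_self P

theorem Matrix.PosSemidef.re_dotProduct_mulVec_le {𝕜 : Type*} [RCLike 𝕜] [DecidableEq n]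
    {M : Matrix n n 𝕜} {c : ℝ}
    (h : ((c : 𝕜) • 1 - M).PosSemidef) {ψ : n → 𝕜} (hψ : star ψ ⬝ᵥ ψ = 1) :
    RCLike.re (star ψ ⬝ᵥ M *ᵥ ψ) ≤ c := by
  have hq : star ψ ⬝ᵥ ((c : 𝕜) • 1 - M) *ᵥ ψ = c - star ψ ⬝ᵥ M *ᵥ ψ := by
    rw [sub_mulVec, dotProduct_sub, smul_mulVec, one_mulVec, dotProduct_smul, hψ, smul_eq_mul,
      mul_one]
  have hnonneg := RCLike.nonneg_iff.mp (hq ▸ h.dotProduct_mulVec_nonneg ψ)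
  simpa using hnonneg.1

end QuadraticForm

/-- Elegant Bell SOS decomposition: `4√3·1 − B^el = (√3/2) Σ_i P_i²`; in
particular `⟨ψ, B^el ψ⟩ ≤ 4√3` for every unit vector `ψ`. -/
theorem elegant_bell_sos {nn : ℕ}
    (A0 A1 A2 A3 B0 B1 B2 : Matrix (Fin nn) (Fin nn) ℂ)
    (hA0 : A0.IsHermitian) (hA1 : A1.IsHermitian) (hA2 : A2.IsHermitian)
    (hA3 : A3.IsHermitian)
    (hB0 : B0.IsHermitian) (hB1 : B1.IsHermitian) (hB2 : B2.IsHermitian)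
    (hA0sq : A0 * A0 = 1) (hA1sq : A1 * A1 = 1) (hA2sq : A2 * A2 = 1)
    (hA3sq : A3 * A3 = 1)
    (hB0sq : B0 * B0 = 1) (hB1sq : B1 * B1 = 1) (hB2sq : B2 * B2 = 1)
    (hcomm : ∀ X ∈ [A0, A1, A2, A3], ∀ Y ∈ [B0, B1, B2], Commute X Y)
    (Bell P0 P1 P2 P3 : Matrix (Fin nn) (Fin nn) ℂ)
    (hBell : Bell = (A0 + A1 - A2 - A3) * B0 + (A0 - A1 + A2 - A3) * B1
      + (A0 - A1 - A2 + A3) * B2)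
    (hP0 : P0 = A0 - ((Real.sqrt 3 : ℂ))⁻¹ • (B0 + B1 + B2))
    (hP1 : P1 = A1 - ((Real.sqrt 3 : ℂ))⁻¹ • (B0 - B1 - B2))
    (hP2 : P2 = A2 - ((Real.sqrt 3 : ℂ))⁻¹ • (-B0 + B1 - B2))
    (hP3 : P3 = A3 - ((Real.sqrt 3 : ℂ))⁻¹ • (-B0 - B1 + B2)) :
    (((4 * Real.sqrt 3 : ℝ) : ℂ) • (1 : Matrix (Fin nn) (Fin nn) ℂ) - Bell =
      ((Real.sqrt 3 / 2 : ℝ) : ℂ) • (P0 * P0 + P1 * P1 + P2 * P2 + P3 * P3)) ∧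
    (∀ ψ : Fin nn → ℂ, star ψ ⬝ᵥ ψ = 1 →
      (star ψ ⬝ᵥ Bell.mulVec ψ).re ≤ 4 * Real.sqrt 3) := by
  have hr : IsSelfAdjoint ((Real.sqrt 3 : ℂ))⁻¹ :=
    (isSelfAdjoint_iff.mpr (Complex.conj_ofReal _)).inv₀
  have hP0H : P0.IsHermitian := hP0 ▸ hA0.sub (((hB0.add hB1).add hB2).smul hr)
  have hP1H : P1.IsHermitian := hP1 ▸ hA1.sub (((hB0.sub hB1).sub hB2).smul hr)
  have hP2H : P2.IsHermitian := hP2 ▸ hA2.sub (((hB0.neg.add hB1).sub hB2).smul hr)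
  have hP3H : P3.IsHermitian := hP3 ▸ hA3.sub (((hB0.neg.sub hB1).add hB2).smul hr)
  have hSOS : ((4 * Real.sqrt 3 : ℝ) : ℂ) • (1 : Matrix (Fin nn) (Fin nn) ℂ) - Bell =
      ((Real.sqrt 3 / 2 : ℝ) : ℂ) • (P0 * P0 + P1 * P1 + P2 * P2 + P3 * P3) := by
    subst hBell hP0 hP1 hP2 hP3
    push_cast
    exact smul_one_sub_elegantBell_eq_smul_sum_mul_self
      (by exact_mod_cast Real.mul_self_sqrt (by norm_num : (0 : ℝ) ≤ 3))
      (by simp [hA0sq, hA1sq, hA2sq, hA3sq]) (by simp [hB0sq, hB1sq, hB2sq]) hcomm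
  have hPSD :
      (((4 * Real.sqrt 3 : ℝ) : ℂ) • (1 : Matrix (Fin nn) (Fin nn) ℂ) - Bell).PosSemidef := by
    rw [hSOS]
    exact (((hP0H.posSemidef_mul_self.add hP1H.posSemidef_mul_self).add
      hP2H.posSemidef_mul_self).add hP3H.posSemidef_mul_self).smul (by positivity)
  exact ⟨hSOS, fun ψ hψ => hPSD.re_dotProduct_mulVec_le hψ⟩
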